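/- For complex numbers z, w and a real number p with 2 < p < ∞, one has |z+w|^p + |z−w|^p ≥ 2(|z|^p + |w|^p), with equality if and only if zw = 0. -/

import Mathlib

/-! With `r = p / 2 > 1`, superadditivity of `t ↦ t ^ r` gives
`‖x‖ ^ p + ‖y‖ ^ p ≤ (‖x‖ ^ 2 + ‖y‖ ^ 2) ^ r`, strictly when `x, y ≠ 0`. The parallelogram law
writes `‖x‖ ^ 2 + ‖y‖ ^ 2` as the mean of `‖x + y‖ ^ 2` and `‖x - y‖ ^ 2`, and convexity of
`t ↦ t ^ r` bounds `2 * (that mean) ^ r` by `‖x + y‖ ^ p + ‖x - y‖ ^ p`. -/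

namespace Real

variable {a b p : ℝ}

lemma add_rpow_lt_rpow_add (ha : 0 < a) (hb : 0 < b) (hp : 1 < p) :
    a ^ p + b ^ p < (a + b) ^ p := by
  have hab : 0 < a + b := add_pos ha hb
  have hp' : 0 < p - 1 := sub_pos.mpr hp
  have split {c : ℝ} (hc : 0 < c) : c ^ p = c * c ^ (p - 1) := by
    rw [← rpow_one_add' hc.le (by linarith), add_sub_cancel]
  rw [split ha, split hb, split hab, add_mul]
  exact add_lt_add
    (mul_lt_mul_of_pos_left (rpow_lt_rpow ha.le (lt_add_of_pos_right a hb) hp') ha)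
    (mul_lt_mul_of_pos_left (rpow_lt_rpow hb.le (lt_add_of_pos_left b ha) hp') hb)

lemma sq_rpow_div_two (ha : 0 ≤ a) (p : ℝ) : (a ^ 2) ^ (p / 2) = a ^ p := by
  rw [← rpow_natCast_mul ha]; congr 1; push_cast; ring

lemma rpow_add_rpow_le_sq_add_sq_rpow (ha : 0 ≤ a) (hb : 0 ≤ b) (hp : 2 ≤ p) :
    a ^ p + b ^ p ≤ (a ^ 2 + b ^ 2) ^ (p / 2) := by
  simpa only [sq_rpow_div_two ha, sq_rpow_div_two hb] using
    add_rpow_le_rpow_add (sq_nonneg a) (sq_nonneg b) (by linarith : 1 ≤ p / 2)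

lemma rpow_add_rpow_lt_sq_add_sq_rpow (ha : 0 < a) (hb : 0 < b) (hp : 2 < p) :
    a ^ p + b ^ p < (a ^ 2 + b ^ 2) ^ (p / 2) := by
  simpa only [sq_rpow_div_two ha.le, sq_rpow_div_two hb.le] using
    add_rpow_lt_rpow_add (pow_pos ha 2) (pow_pos hb 2) (by linarith : 1 < p / 2)

lemma two_mul_sq_add_sq_div_two_rpow_le (ha : 0 ≤ a) (hb : 0 ≤ b) (hp : 2 ≤ p) :
    2 * ((a ^ 2 + b ^ 2) / 2) ^ (p / 2) ≤ a ^ p + b ^ p := by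
  have h := (convexOn_rpow (by linarith : 1 ≤ p / 2)).2 (sq_nonneg a) (sq_nonneg b)
    (by norm_num : (0 : ℝ) ≤ 1 / 2) (by norm_num : (0 : ℝ) ≤ 1 / 2) (by norm_num)
  simp only [smul_eq_mul, sq_rpow_div_two ha, sq_rpow_div_two hb] at h
  rw [show (a ^ 2 + b ^ 2) / 2 = 1 / 2 * a ^ 2 + 1 / 2 * b ^ 2 by ring]
  linarith

end Real

open Real

section InnerProductSpace

variable {E : Type*} [NormedAddCommGroup E] [InnerProductSpace ℝ E] {p : ℝ}

lemma two_mul_sq_norm_add_sq_norm_rpow_le (x y : E) (hp : 2 ≤ p) :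
    2 * (‖x‖ ^ 2 + ‖y‖ ^ 2) ^ (p / 2) ≤ ‖x + y‖ ^ p + ‖x - y‖ ^ p := by
  have parallelogram := parallelogram_law_with_norm ℝ x y
  rw [show ‖x‖ ^ 2 + ‖y‖ ^ 2 = (‖x + y‖ ^ 2 + ‖x - y‖ ^ 2) / 2 by linarith]
  exact two_mul_sq_add_sq_div_two_rpow_le (norm_nonneg _) (norm_nonneg _) hp

theorem two_mul_norm_rpow_add_le (x y : E) (hp : 2 ≤ p) :
    2 * (‖x‖ ^ p + ‖y‖ ^ p) ≤ ‖x + y‖ ^ p + ‖x - y‖ ^ p := by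
  grw [rpow_add_rpow_le_sq_add_sq_rpow (norm_nonneg x) (norm_nonneg y) hp]
  exact two_mul_sq_norm_add_sq_norm_rpow_le x y hp

theorem two_mul_norm_rpow_add_lt {x y : E} (hx : x ≠ 0) (hy : y ≠ 0) (hp : 2 < p) :
    2 * (‖x‖ ^ p + ‖y‖ ^ p) < ‖x + y‖ ^ p + ‖x - y‖ ^ p := by
  grw [rpow_add_rpow_lt_sq_add_sq_rpow (norm_pos_iff.mpr hx) (norm_pos_iff.mpr hy) hp]
  exact two_mul_sq_norm_add_sq_norm_rpow_le x y hp.le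

theorem norm_rpow_add_eq_iff {x y : E} (hp : 2 < p) :
    ‖x + y‖ ^ p + ‖x - y‖ ^ p = 2 * (‖x‖ ^ p + ‖y‖ ^ p) ↔ x = 0 ∨ y = 0 := by
  have hp0 : p ≠ 0 := by positivity
  constructor
  · intro h
    by_contra! hxy
    exact (two_mul_norm_rpow_add_lt hxy.1 hxy.2 hp).ne' h
  · rintro (rfl | rfl) <;> simp [zero_rpow hp0] <;> ring

end InnerProductSpace

/-- For complex numbers `z, w` and `2 < p < ∞`, one has
`|z+w|^p + |z−w|^p ≥ 2(|z|^p + |w|^p)`, with equality iff `zw = 0`. -/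
theorem stmt3 (z w : ℂ) (p : ℝ) (hp : 2 < p) :
    2 * (‖z‖ ^ p + ‖w‖ ^ p)
      ≤ ‖z + w‖ ^ p + ‖z - w‖ ^ p ∧
    (‖z + w‖ ^ p + ‖z - w‖ ^ p
      = 2 * (‖z‖ ^ p + ‖w‖ ^ p) ↔ z * w = 0) := by
  rw [mul_eq_zero]
  exact ⟨two_mul_norm_rpow_add_le z w hp.le, norm_rpow_add_eq_iff hp⟩
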